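/- Let (T,S,φ) be an irreducible planar tanglegram of size at least 3. Then (T,S,φ) has exactly two planar layouts, and these two layouts are mirror images of one another: each is obtained from the other by reversing the order of X and reversing the order of Y. -/

import Mathlib

/-!
# Tanglegrams

A rooted binary tree is modelled by the inductive type `BTree`, whose leaves carry
natural-number labels.  Vertices of a tree are identified with the sets of labels of
their leaf descendants (their *clades*): since all leaf labels of the trees occurring
in a tanglegram are distinct, this identification is injective.

A tanglegram of size `n` consists of two rooted binary trees whose leaves are labelled
bijectively by `{0, …, n-1}` together with a permutation `φ` matching leaf `t i` of
the first tree with leaf `s (φ i)` of the second tree.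

A layout is recorded by the pair of lists of leaf labels of the two trees, read from
top to bottom; the defining property is that the leaf set of every vertex occupies a
consecutive block.
-/

/-- A rooted binary tree with leaves labelled by natural numbers. -/
inductive BTree : Type
  | leaf : ℕ → BTree
  | node : BTree → BTree → BTree

namespace BTree

/-- The list of leaf labels of a tree, from left to right. -/
def leafList : BTree → List ℕ
  | .leaf i => [i]
  | .node l r => l.leafList ++ r.leafList

/-- The set of leaf labels of a tree. -/
def leaves (t : BTree) : Finset ℕ := t.leafList.toFinset

/-- `t.Clade s` : `s` is the set of labels of the leaf descendants of some vertex
of `t`. -/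
def Clade : BTree → Finset ℕ → Prop
  | .leaf i, s => s = {i}
  | .node l r, s => s = (BTree.node l r).leaves ∨ l.Clade s ∨ r.Clade s

/-- `t.InternalClade s` : `s` is the set of labels of the leaf descendants of some
*internal* vertex of `t`. -/
def InternalClade : BTree → Finset ℕ → Prop
  | .leaf _, _ => False
  | .node l r, s => s = (BTree.node l r).leaves ∨ l.InternalClade s ∨ r.InternalClade s

/-- `t.NodeClades c c₁ c₂` : some internal vertex of `t` has leaf-label set `c`, and
its two children have leaf-label sets `c₁` and `c₂` (in left-right order). -/
def NodeClades : BTree → Finset ℕ → Finset ℕ → Finset ℕ → Prop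
  | .leaf _, _, _, _ => False
  | .node l r, c, c₁, c₂ =>
      (c = (BTree.node l r).leaves ∧ c₁ = l.leaves ∧ c₂ = r.leaves) ∨
      l.NodeClades c c₁ c₂ ∨ r.NodeClades c c₁ c₂

end BTree

/-- A tanglegram of size `n` : two rooted binary trees `T` and `S` whose leaves are
labelled bijectively by `{0, …, n-1}`, together with a permutation `φ` matching the
leaf of `T` labelled `i` with the leaf of `S` labelled `φ i`.  (The permutation is
normalised to be the identity off `{0, …, n-1}`.) -/
structure Tanglegram (n : ℕ) where
  T : BTree
  S : BTree
  φ : Equiv.Perm ℕ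
  hT : T.leafList.Nodup ∧ ∀ i, i ∈ T.leafList ↔ i < n
  hS : S.leafList.Nodup ∧ ∀ i, i ∈ S.leafList ↔ i < n
  hφ : ∀ i, n ≤ i → φ i = i

/-- The elements of the finite set `s` occur as a consecutive block of the list `X`. -/
def ConsecIn (X : List ℕ) (s : Finset ℕ) : Prop :=
  ∃ l m r : List ℕ, X = l ++ m ++ r ∧ ∀ a, a ∈ m ↔ a ∈ s

/-- `(X, Y)` is a layout of the tanglegram `G` : `X` is an ordering of the leaf labels
of `T`, `Y` one of the leaf labels of `S`, and the leaf set of every vertex of either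
tree forms a consecutive block. -/
def IsLayout {n : ℕ} (G : Tanglegram n) (X Y : List ℕ) : Prop :=
  X.Perm G.T.leafList ∧ Y.Perm G.S.leafList ∧
    (∀ s, G.T.Clade s → ConsecIn X s) ∧ (∀ s, G.S.Clade s → ConsecIn Y s)

/-- The between-tree edges `e i` and `e j` cross in the layout `(X, Y)` :
`t i` precedes `t j` in `X` while `s (φ j)` precedes `s (φ i)` in `Y`. -/
def Crossing {n : ℕ} (G : Tanglegram n) (X Y : List ℕ) (i j : ℕ) : Prop :=
  i < n ∧ j < n ∧ X.idxOf i < X.idxOf j ∧ Y.idxOf (G.φ j) < Y.idxOf (G.φ i)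

/-- The number of crossings of the layout `(X, Y)` (each crossing pair of between-tree
edges is counted once, ordered by position in `X`). -/
def crossCount {n : ℕ} (G : Tanglegram n) (X Y : List ℕ) : ℕ :=
  ((Finset.range n ×ˢ Finset.range n).filter fun p =>
    X.idxOf p.1 < X.idxOf p.2 ∧ Y.idxOf (G.φ p.2) < Y.idxOf (G.φ p.1)).card

/-- A planar layout is a layout with no crossings. -/
def IsPlanarLayout {n : ℕ} (G : Tanglegram n) (X Y : List ℕ) : Prop :=
  IsLayout G X Y ∧ ∀ i j, ¬ Crossing G X Y i j

/-- A tanglegram is planar if it admits a planar layout. -/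
def IsPlanarTanglegram {n : ℕ} (G : Tanglegram n) : Prop :=
  ∃ X Y, IsPlanarLayout G X Y

/-- The crossing number: the minimum number of crossings over all layouts. -/
noncomputable def crt {n : ℕ} (G : Tanglegram n) : ℕ :=
  sInf {c | ∃ X Y, IsLayout G X Y ∧ crossCount G X Y = c}

/-- `(cu, cv)` is a leaf-matched pair of `G` (a pair of internal vertices, recorded by
their leaf-label sets, such that `φ` matches the leaves below the first exactly with
the leaves below the second). -/
def LeafMatchedPair {n : ℕ} (G : Tanglegram n) (cu cv : Finset ℕ) : Prop :=
  G.T.InternalClade cu ∧ G.S.InternalClade cv ∧ cv = cu.image G.φ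

/-- A tanglegram (of size at least 2) is irreducible if its only leaf-matched pair is
the pair of roots. -/
def IrreducibleTanglegram {n : ℕ} (G : Tanglegram n) : Prop :=
  2 ≤ n ∧ ∀ cu cv, LeafMatchedPair G cu cv →
    cu = Finset.range n ∧ cv = Finset.range n

/-- `X'` is obtained from `X` by reversing the consecutive block consisting of the
elements of `s` : the effect on a layout of a flip at the vertex with leaf set `s`. -/
def FlipBlock (s : Finset ℕ) (X X' : List ℕ) : Prop :=
  ∃ l m r : List ℕ, X = l ++ m ++ r ∧ (∀ a, a ∈ m ↔ a ∈ s) ∧ X' = l ++ m.reverse ++ r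

/-- `X'` is obtained from `X` by interchanging the adjacent blocks consisting of the
elements of `s₁` and of `s₂` (occurring in this order), keeping the relative order of
the elements within each block. -/
def SwitchBlock (s₁ s₂ : Finset ℕ) (X X' : List ℕ) : Prop :=
  ∃ l m₁ m₂ r : List ℕ, X = l ++ m₁ ++ m₂ ++ r ∧ (∀ a, a ∈ m₁ ↔ a ∈ s₁) ∧
    (∀ a, a ∈ m₂ ↔ a ∈ s₂) ∧ X' = l ++ m₂ ++ m₁ ++ r

/-- The effect of a subtree switch at an internal vertex whose children have leaf sets
`c₁` and `c₂` (in either order in the layout). -/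
def SwitchAt (c₁ c₂ : Finset ℕ) (X X' : List ℕ) : Prop :=
  SwitchBlock c₁ c₂ X X' ∨ SwitchBlock c₂ c₁ X X'

/-- One paired flip at a leaf-matched pair of `G`, acting on layouts. -/
def PairedFlipStep {n : ℕ} (G : Tanglegram n) (p q : List ℕ × List ℕ) : Prop :=
  ∃ cu cv, LeafMatchedPair G cu cv ∧ FlipBlock cu p.1 q.1 ∧ FlipBlock cv p.2 q.2

/-! ## Induced subtanglegrams

For `I ⊆ {0, …, n-1}`, the induced subtanglegram `(T_I, S_{φ(I)}, φ|_I)` is obtained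
by keeping only the leaves indexed by `I` (resp. `φ(I)`) and suppressing vertices with
a single remaining child.  Its vertices are identified with the vertices of `T`, `S`
that survive, and the clades of `T_I` are exactly the nonempty sets `c ∩ I` for `c` a
clade of `T`. -/

/-- `(A, B)` is a layout of the subtanglegram of `G` induced by `I` : `A` orders the
leaf labels in `I`, `B` those in `φ(I)`, and every clade of the induced subtrees is
consecutive. -/
def IsSubLayout {n : ℕ} (G : Tanglegram n) (I : Finset ℕ) (A B : List ℕ) : Prop :=
  A.Nodup ∧ (∀ a, a ∈ A ↔ a ∈ I) ∧ B.Nodup ∧ (∀ b, b ∈ B ↔ b ∈ I.image G.φ) ∧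
    (∀ c, G.T.Clade c → ConsecIn A (c ∩ I)) ∧
    (∀ c, G.S.Clade c → ConsecIn B (c ∩ I.image G.φ))

/-- A planar layout of the subtanglegram induced by `I` : a layout in which no two of
the between-tree edges indexed by `I` cross. -/
def IsPlanarSubLayout {n : ℕ} (G : Tanglegram n) (I : Finset ℕ) (A B : List ℕ) : Prop :=
  IsSubLayout G I A B ∧ ∀ i ∈ I, ∀ j ∈ I,
    ¬ (A.idxOf i < A.idxOf j ∧ B.idxOf (G.φ j) < B.idxOf (G.φ i))

/-- The subtanglegram of `G` induced by `I` is planar. -/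
def SubPlanar {n : ℕ} (G : Tanglegram n) (I : Finset ℕ) : Prop :=
  ∃ A B, IsPlanarSubLayout G I A B

/-- The layout `(X, Y)` of `G` restricts (deleting the leaves not indexed by `I`,
resp. `φ(I)`) to a planar layout of the subtanglegram induced by `I`. -/
def RestrictsToPlanarSub {n : ℕ} (G : Tanglegram n) (I : Finset ℕ) (X Y : List ℕ) :
    Prop :=
  IsPlanarSubLayout G I (X.filter fun a => decide (a ∈ I))
    (Y.filter fun b => decide (b ∈ I.image G.φ))

/-- The vertex of the tree `t` with leaf set `c` is an internal vertex of the subtree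
induced by `I` : both of its children have leaf descendants indexed by `I` (so it is
neither suppressed nor outside the minimal subtree). -/
def SurvivesInternal (t : BTree) (I : Finset ℕ) (c : Finset ℕ) : Prop :=
  ∃ c₁ c₂, t.NodeClades c c₁ c₂ ∧ (c₁ ∩ I).Nonempty ∧ (c₂ ∩ I).Nonempty

/-- `(cu, cv)` is a member of `L(I)`, the set of leaf-matched pairs of the
subtanglegram induced by `I` : the pair is recorded by the full leaf sets in `T`, `S`
of the two vertices, which are internal vertices of the induced subtrees whose leaf
sets within the subtanglegram are matched by `φ`. -/
def MemLI {n : ℕ} (G : Tanglegram n) (I : Finset ℕ) (cu cv : Finset ℕ) : Prop :=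
  SurvivesInternal G.T I cu ∧ SurvivesInternal G.S (I.image G.φ) cv ∧
    (cu ∩ I).image G.φ = cv ∩ I.image G.φ


section ListOrder
open List

lemma indexOf_map_equiv (f : ℕ ≃ ℕ) (a : ℕ) (l : List ℕ) :
    (l.map f).idxOf (f a) = l.idxOf a := by
  induction l with
  | nil => rfl
  | cons x xs ih =>
      simp only [List.map_cons, List.idxOf_cons, ih]
      have : (f x == f a) = (x == a) := by
        by_cases h : x = a <;> simp [h, f.injective.eq_iff]
      rw [this]

/-- In a decomposition `l ++ m ++ r`, indices of members of `m`. -/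
lemma idx_mem_mid {l m r : List ℕ} {u : ℕ} (hu : u ∈ m) (hul : u ∉ l) :
    l.length ≤ (l ++ m ++ r).idxOf u ∧ (l ++ m ++ r).idxOf u < l.length + m.length := by
  rw [List.append_assoc, List.idxOf_append_of_notMem hul,
    List.idxOf_append_of_mem hu]
  have := List.idxOf_lt_length_iff.2 hu
  omega

lemma idx_not_mem_mid {l m r : List ℕ} {u : ℕ} (hu : u ∉ m) (humem : u ∈ l ++ m ++ r) :
    (l ++ m ++ r).idxOf u < l.length ∨
      l.length + m.length ≤ (l ++ m ++ r).idxOf u := by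
  by_cases hl : u ∈ l
  · left
    rw [List.append_assoc, List.idxOf_append_of_mem hl]
    exact List.idxOf_lt_length_iff.2 hl
  · right
    rw [List.append_assoc, List.idxOf_append_of_notMem hl,
      List.idxOf_append_of_notMem hu]
    omega

/-- Nodup: members of `m` are not in `l`. -/
lemma not_mem_left_of_nodup {l m r : List ℕ} {u : ℕ} (h : (l ++ m ++ r).Nodup)
    (hu : u ∈ m) : u ∉ l := by
  intro hl
  rw [List.append_assoc] at h
  exact (List.disjoint_of_nodup_append h) hl (by simp [hu])

/-- Sandwich: if `s` is consecutive in `X`, `a b ∈ s`, `c ∈ X`, `c ∉ s`, then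
`c` is before both or after both. -/
lemma sandwich {X : List ℕ} {s : Finset ℕ} (hX : X.Nodup)
    (hc : ConsecIn X s) {a b c : ℕ} (ha : a ∈ s) (hb : b ∈ s) (hcs : c ∉ s)
    (hamem : a ∈ X) (hcmem : c ∈ X) :
    (X.idxOf c < X.idxOf a ∧ X.idxOf c < X.idxOf b) ∨
    (X.idxOf a < X.idxOf c ∧ X.idxOf b < X.idxOf c) := by
  obtain ⟨l, m, r, hdecomp, hm⟩ := hc
  subst hdecomp
  have ham : a ∈ m := (hm a).2 ha
  have hbm : b ∈ m := (hm b).2 hb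
  have hcm : c ∉ m := fun h => hcs ((hm c).1 h)
  have h1 := idx_mem_mid (r := r) ham (not_mem_left_of_nodup hX ham)
  have h2 := idx_mem_mid (r := r) hbm (not_mem_left_of_nodup hX hbm)
  have h3 := idx_not_mem_mid hcm hcmem
  omega

/-- Cross-constancy, variant 1: `a, a' ∈ s`, `b ∉ s`. -/
lemma cross_const₁ {X : List ℕ} {s : Finset ℕ} (hX : X.Nodup)
    (hc : ConsecIn X s) {a a' b : ℕ} (ha : a ∈ s) (ha' : a' ∈ s) (hb : b ∉ s)
    (hamem : a ∈ X) (ha'mem : a' ∈ X) (hbmem : b ∈ X) :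
    (X.idxOf a < X.idxOf b ↔ X.idxOf a' < X.idxOf b) := by
  rcases sandwich hX hc ha ha' hb hamem hbmem with ⟨h1, h2⟩ | ⟨h1, h2⟩ <;> omega

/-- Cross-constancy, variant 2: `b, b' ∈ s`, `a ∉ s`. -/
lemma cross_const₂ {X : List ℕ} {s : Finset ℕ} (hX : X.Nodup)
    (hc : ConsecIn X s) {a b b' : ℕ} (hb : b ∈ s) (hb' : b' ∈ s) (ha : a ∉ s)
    (hbmem : b ∈ X) (hb'mem : b' ∈ X) (hamem : a ∈ X) :
    (X.idxOf a < X.idxOf b ↔ X.idxOf a < X.idxOf b') := by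
  rcases sandwich hX hc hb hb' ha hbmem hamem with ⟨h1, h2⟩ | ⟨h1, h2⟩ <;> omega

/-- Overlap lemma: `A`, `B` consecutive, `a ∈ A \ B`, `b ∈ A ∩ B`, `c ∈ B \ A`. -/
lemma overlap_link {X : List ℕ} {A B : Finset ℕ} (hX : X.Nodup)
    (hA : ConsecIn X A) (hB : ConsecIn X B) {a b c : ℕ}
    (haA : a ∈ A) (haB : a ∉ B) (hbA : b ∈ A) (hbB : b ∈ B) (hcA : c ∉ A) (hcB : c ∈ B)
    (hamem : a ∈ X) (hbmem : b ∈ X) (hcmem : c ∈ X) :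
    (X.idxOf a < X.idxOf b ↔ X.idxOf b < X.idxOf c) := by
  have s1 := sandwich hX hA haA hbA hcA hamem hcmem
  have s2 := sandwich hX hB hbB hcB haB hbmem hamem
  omega

end ListOrder

section ListEq
open List

lemma mem_cons_ne {a x : ℕ} {xs : List ℕ} (h : a ∈ x :: xs) (hne : a ≠ x) : a ∈ xs := by
  rcases List.mem_cons.1 h with rfl | h
  · exact absurd rfl hne
  · exact h

lemma list_eq_of_order {X X' : List ℕ} (hX : X.Nodup) (hX' : X'.Nodup)
    (hmem : ∀ a, a ∈ X ↔ a ∈ X')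
    (hord : ∀ a b, a ∈ X → b ∈ X → X.idxOf a < X.idxOf b →
      X'.idxOf a < X'.idxOf b) : X = X' := by
  induction X generalizing X' with
  | nil =>
      cases X' with
      | nil => rfl
      | cons y ys => exact absurd ((hmem y).2 (by simp)) (by simp)
  | cons x xs ih =>
      cases X' with
      | nil => exact absurd ((hmem x).1 (by simp)) (by simp)
      | cons y ys =>
          have hxxs : x ∉ xs := (List.nodup_cons.1 hX).1
          have hxy : x = y := by
            by_contra hne
            have hyX : y ∈ x :: xs := (hmem y).2 (by simp)
            have hymem : y ∈ xs := mem_cons_ne hyX (fun h => hne h.symm)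
            have h1 : (x :: xs).idxOf x < (x :: xs).idxOf y := by
              simp [List.idxOf_cons, hne, show (y == x) = false by
                simpa using fun h => hne h.symm]
            have h2 := hord x y (by simp) hyX h1
            have : (y :: ys).idxOf y = 0 := by simp
            omega
          subst hxy
          have hxys : x ∉ ys := (List.nodup_cons.1 hX').1
          congr 1
          apply ih (List.nodup_cons.1 hX).2 (List.nodup_cons.1 hX').2
          · intro a
            constructor
            · intro ha
              have hax : a ≠ x := fun h => hxxs (h ▸ ha)
              exact mem_cons_ne ((hmem a).1 (List.mem_cons_of_mem _ ha)) hax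
            · intro ha
              have hax : a ≠ x := fun h => hxys (h ▸ ha)
              exact mem_cons_ne ((hmem a).2 (List.mem_cons_of_mem _ ha)) hax
          · intro a b ha hb hab
            have hax : a ≠ x := fun h => hxxs (h ▸ ha)
            have hbx : b ≠ x := fun h => hxxs (h ▸ hb)
            have e1 : (x == a) = false := beq_eq_false_iff_ne.2 (Ne.symm hax)
            have e2 : (x == b) = false := beq_eq_false_iff_ne.2 (Ne.symm hbx)
            have h1 : (x :: xs).idxOf a < (x :: xs).idxOf b := by
              simp [List.idxOf_cons, e1, e2]
              omega
            have h4 := hord a b (List.mem_cons_of_mem _ ha) (List.mem_cons_of_mem _ hb) h1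
            simp [List.idxOf_cons, e1, e2] at h4
            omega

lemma indexOf_reverse {X : List ℕ} (hX : X.Nodup) {a : ℕ} (ha : a ∈ X) :
    X.reverse.idxOf a = X.length - 1 - X.idxOf a := by
  induction X with
  | nil => simp at ha
  | cons x xs ih =>
      rcases List.nodup_cons.1 hX with ⟨hx, hxs⟩
      rcases List.mem_cons.1 ha with rfl | hmem
      · have h1 : a ∉ xs.reverse := by simpa using hx
        simp [List.reverse_cons, List.idxOf_append_of_notMem h1]
      · have hax : a ≠ x := fun h => hx (h ▸ hmem)
        have h1 : a ∈ xs.reverse := by simpa using hmem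
        rw [List.reverse_cons, List.idxOf_append_of_mem h1, ih hxs hmem]
        have h2 := List.idxOf_lt_length_iff.2 hmem
        have e1 : (x == a) = false := beq_eq_false_iff_ne.2 (Ne.symm hax)
        have h3 : (x :: xs).idxOf a = xs.idxOf a + 1 := by
          simp [List.idxOf_cons, e1]
        rw [h3]
        simp only [List.length_cons]
        omega

lemma consecIn_reverse {X : List ℕ} {s : Finset ℕ} (h : ConsecIn X s) :
    ConsecIn X.reverse s := by
  obtain ⟨l, m, r, hd, hm⟩ := h
  exact ⟨r.reverse, m.reverse, l.reverse, by simp [hd], fun a => by simpa using hm a⟩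

lemma consecIn_map_equiv {X : List ℕ} {s : Finset ℕ} (f : ℕ ≃ ℕ)
    (h : ConsecIn X (s.image f.symm)) : ConsecIn (X.map f) s := by
  obtain ⟨l, m, r, hd, hm⟩ := h
  refine ⟨l.map f, m.map f, r.map f, by simp [hd], fun a => ?_⟩
  constructor
  · rintro ha
    obtain ⟨b, hb, rfl⟩ := List.mem_map.1 ha
    have h1 := (hm b).1 hb
    obtain ⟨c, hc, hcb⟩ := Finset.mem_image.1 h1
    have : c = f b := by rw [← hcb]; simp
    exact this ▸ hc
  · intro ha
    exact List.mem_map.2 ⟨f.symm a, (hm _).2 (Finset.mem_image.2 ⟨a, ha, rfl⟩), by simp⟩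

end ListEq

namespace BTree

lemma mem_leaves {t : BTree} {a : ℕ} : a ∈ t.leaves ↔ a ∈ t.leafList := by
  simp [leaves]

lemma leaves_node (l r : BTree) : (node l r).leaves = l.leaves ∪ r.leaves := by
  ext a; simp [leaves, leafList, List.mem_append]

lemma leaves_nonempty (t : BTree) : t.leaves.Nonempty := by
  induction t with
  | leaf i => exact ⟨i, by simp [leaves, leafList]⟩
  | node l r ihl ihr => rw [leaves_node]; exact ihl.mono Finset.subset_union_left

lemma clade_leaves (t : BTree) : t.Clade t.leaves := by
  cases t with
  | leaf i => simp [Clade, leaves, leafList]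
  | node l r => exact Or.inl rfl

lemma clade_subset {t : BTree} {c : Finset ℕ} (h : t.Clade c) : c ⊆ t.leaves := by
  induction t with
  | leaf i => simp [Clade] at h; subst h; simp [leaves, leafList]
  | node l r ihl ihr =>
      rcases h with rfl | h | h
      · exact subset_rfl
      · exact (ihl h).trans (by rw [leaves_node]; exact Finset.subset_union_left)
      · exact (ihr h).trans (by rw [leaves_node]; exact Finset.subset_union_right)

lemma clade_nonempty {t : BTree} {c : Finset ℕ} (h : t.Clade c) : c.Nonempty := by
  induction t with
  | leaf i => simp [Clade] at h; subst h; simp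
  | node l r ihl ihr =>
      rcases h with rfl | h | h
      · exact leaves_nonempty _
      · exact ihl h
      · exact ihr h

lemma nodup_node {l r : BTree} (h : (node l r).leafList.Nodup) :
    l.leafList.Nodup ∧ r.leafList.Nodup ∧ Disjoint l.leaves r.leaves := by
  rw [show (node l r).leafList = l.leafList ++ r.leafList from rfl] at h
  refine ⟨h.of_append_left, h.of_append_right, ?_⟩
  rw [Finset.disjoint_left]
  intro a hal har
  exact (List.disjoint_of_nodup_append h) (mem_leaves.1 hal) (mem_leaves.1 har)

lemma nodeClades_clade₁ {t : BTree} {c c₁ c₂ : Finset ℕ} (h : t.NodeClades c c₁ c₂) :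
    t.Clade c₁ := by
  induction t with
  | leaf i => exact absurd h id
  | node l r ihl ihr =>
      rcases h with ⟨_, rfl, _⟩ | h | h
      · exact Or.inr (Or.inl (clade_leaves l))
      · exact Or.inr (Or.inl (ihl h))
      · exact Or.inr (Or.inr (ihr h))

lemma nodeClades_clade₂ {t : BTree} {c c₁ c₂ : Finset ℕ} (h : t.NodeClades c c₁ c₂) :
    t.Clade c₂ := by
  induction t with
  | leaf i => exact absurd h id
  | node l r ihl ihr =>
      rcases h with ⟨_, _, rfl⟩ | h | h
      · exact Or.inr (Or.inr (clade_leaves r))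
      · exact Or.inr (Or.inl (ihl h))
      · exact Or.inr (Or.inr (ihr h))

lemma nodeClades_union {t : BTree} {c c₁ c₂ : Finset ℕ} (h : t.NodeClades c c₁ c₂) :
    c = c₁ ∪ c₂ := by
  induction t with
  | leaf i => exact absurd h id
  | node l r ihl ihr =>
      rcases h with ⟨rfl, rfl, rfl⟩ | h | h
      · exact leaves_node l r
      · exact ihl h
      · exact ihr h

lemma nodeClades_disjoint {t : BTree} {c c₁ c₂ : Finset ℕ} (hnd : t.leafList.Nodup)
    (h : t.NodeClades c c₁ c₂) : Disjoint c₁ c₂ := by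
  induction t with
  | leaf i => exact absurd h id
  | node l r ihl ihr =>
      obtain ⟨h1, h2, h3⟩ := nodup_node hnd
      rcases h with ⟨_, rfl, rfl⟩ | h | h
      · exact h3
      · exact ihl h1 h
      · exact ihr h2 h

lemma internalClade_of_two_le {t : BTree} {c : Finset ℕ} (h : t.Clade c)
    (hc : 2 ≤ c.card) : t.InternalClade c := by
  induction t with
  | leaf i =>
      simp [Clade] at h; subst h; simp at hc
  | node l r ihl ihr =>
      rcases h with rfl | h | h
      · exact Or.inl rfl
      · exact Or.inr (Or.inl (ihl h))
      · exact Or.inr (Or.inr (ihr h))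

lemma exists_nodeClades {t : BTree} {c : Finset ℕ} (h : t.Clade c) (hc : 2 ≤ c.card) :
    ∃ c₁ c₂, t.NodeClades c c₁ c₂ := by
  induction t with
  | leaf i => simp [Clade] at h; subst h; simp at hc
  | node l r ihl ihr =>
      rcases h with rfl | h | h
      · exact ⟨l.leaves, r.leaves, Or.inl ⟨rfl, rfl, rfl⟩⟩
      · obtain ⟨c₁, c₂, hc⟩ := ihl h; exact ⟨c₁, c₂, Or.inr (Or.inl hc)⟩
      · obtain ⟨c₁, c₂, hc⟩ := ihr h; exact ⟨c₁, c₂, Or.inr (Or.inr hc)⟩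

/-- Key structural dichotomy: any nonempty subset of the leaves of a tree either
equals some clade or is overlapped by some clade. -/
lemma exists_clade_overlap_or_eq {t : BTree} (hnd : t.leafList.Nodup) {c : Finset ℕ}
    (hsub : c ⊆ t.leaves) (hne : c.Nonempty) :
    (∃ d, t.Clade d ∧ (d ∩ c).Nonempty ∧ (c \ d).Nonempty ∧ (d \ c).Nonempty) ∨
    (∃ d, t.Clade d ∧ d = c) := by
  induction t with
  | leaf i =>
      right
      refine ⟨{i}, by simp [Clade], ?_⟩
      have : c ⊆ {i} := by simpa [leaves, leafList] using hsub
      obtain ⟨x, hx⟩ := hne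
      have hxi : x = i := by simpa using this hx
      subst hxi
      apply Finset.Subset.antisymm _ this
      simpa using hx
  | node l r ihl ihr =>
      obtain ⟨h1, h2, h3⟩ := nodup_node hnd
      by_cases hcl : c ⊆ l.leaves
      · rcases ihl h1 hcl with ⟨d, hd, h⟩ | ⟨d, hd, h⟩
        · exact Or.inl ⟨d, Or.inr (Or.inl hd), h⟩
        · exact Or.inr ⟨d, Or.inr (Or.inl hd), h⟩
      · by_cases hcr : c ⊆ r.leaves
        · rcases ihr h2 hcr with ⟨d, hd, h⟩ | ⟨d, hd, h⟩
          · exact Or.inl ⟨d, Or.inr (Or.inr hd), h⟩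
          · exact Or.inr ⟨d, Or.inr (Or.inr hd), h⟩
        · -- c meets both sides
          obtain ⟨xl, hxl⟩ : (c ∩ l.leaves).Nonempty := by
            by_contra h
            apply hcr
            intro a ha
            have := hsub ha
            rw [leaves_node] at this
            rcases Finset.mem_union.1 this with h' | h'
            · exact absurd (⟨a, Finset.mem_inter.2 ⟨ha, h'⟩⟩ : (c ∩ l.leaves).Nonempty) h
            · exact h'
          obtain ⟨xr, hxr⟩ : (c ∩ r.leaves).Nonempty := by
            by_contra h
            apply hcl
            intro a ha
            have := hsub ha
            rw [leaves_node] at this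
            rcases Finset.mem_union.1 this with h' | h'
            · exact h'
            · exact absurd (⟨a, Finset.mem_inter.2 ⟨ha, h'⟩⟩ : (c ∩ r.leaves).Nonempty) h
          by_cases hceq : c = (node l r).leaves
          · exact Or.inr ⟨c, hceq ▸ Or.inl rfl, rfl⟩
          · obtain ⟨y, hy, hyc⟩ : ∃ y, y ∈ (node l r).leaves ∧ y ∉ c := by
              by_contra h
              push_neg at h
              exact hceq (Finset.Subset.antisymm hsub (fun a ha => h a ha))
            rw [leaves_node] at hy
            rcases Finset.mem_union.1 hy with hyl | hyr
            · left
              refine ⟨l.leaves, Or.inr (Or.inl (clade_leaves l)), ?_, ?_, ⟨y, Finset.mem_sdiff.2 ⟨hyl, hyc⟩⟩⟩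
              · exact ⟨xl, Finset.mem_inter.2 ⟨(Finset.mem_inter.1 hxl).2, (Finset.mem_inter.1 hxl).1⟩⟩
              · refine ⟨xr, Finset.mem_sdiff.2 ⟨(Finset.mem_inter.1 hxr).1, ?_⟩⟩
                intro h
                exact (Finset.disjoint_left.1 h3) h (Finset.mem_inter.1 hxr).2
            · left
              refine ⟨r.leaves, Or.inr (Or.inr (clade_leaves r)), ?_, ?_, ⟨y, Finset.mem_sdiff.2 ⟨hyr, hyc⟩⟩⟩
              · exact ⟨xr, Finset.mem_inter.2 ⟨(Finset.mem_inter.1 hxr).2, (Finset.mem_inter.1 hxr).1⟩⟩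
              · refine ⟨xl, Finset.mem_sdiff.2 ⟨(Finset.mem_inter.1 hxl).1, ?_⟩⟩
                intro h
                exact (Finset.disjoint_left.1 h3) (Finset.mem_inter.1 hxl).2 h

end BTree

section TG
variable {n : ℕ} (G : Tanglegram n)

lemma phi_mem_iff {a : ℕ} : G.φ a < n ↔ a < n := by
  constructor
  · intro h
    by_contra h'
    push_neg at h'
    rw [G.hφ a h'] at h
    omega
  · intro h
    by_contra h'
    push_neg at h'
    have := G.hφ _ h'
    have := G.φ.injective this
    omega

lemma phi_symm_mem_iff {a : ℕ} : G.φ.symm a < n ↔ a < n := by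
  have h := phi_mem_iff G (a := G.φ.symm a)
  rw [G.φ.apply_symm_apply] at h
  exact h.symm

lemma mem_T_leaves {a : ℕ} : a ∈ G.T.leaves ↔ a < n :=
  BTree.mem_leaves.trans (G.hT.2 a)

lemma mem_S_leaves {a : ℕ} : a ∈ G.S.leaves ↔ a < n :=
  BTree.mem_leaves.trans (G.hS.2 a)

/-- A single-list encoding of planar layouts. -/
def GValid (X : List ℕ) : Prop :=
  X.Nodup ∧ (∀ a, a ∈ X ↔ a < n) ∧ (∀ c, G.T.Clade c → ConsecIn X c) ∧
    (∀ d, G.S.Clade d → ConsecIn X (d.image G.φ.symm))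

lemma mem_map_phi_iff {X : List ℕ} (hX : ∀ a, a ∈ X ↔ a < n) (a : ℕ) :
    a ∈ X.map G.φ ↔ a < n := by
  rw [List.mem_map]
  constructor
  · rintro ⟨b, hb, rfl⟩
    exact (phi_mem_iff G).2 ((hX b).1 hb)
  · intro ha
    exact ⟨G.φ.symm a, (hX _).2 (phi_symm_mem_iff G |>.2 ha), G.φ.apply_symm_apply a⟩

lemma gvalid_planar {X : List ℕ} (hX : GValid G X) :
    IsPlanarLayout G X (X.map G.φ) := by
  obtain ⟨hnd, hmem, hTc, hSc⟩ := hX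
  have hmapnd : (X.map G.φ).Nodup := hnd.map G.φ.injective
  refine ⟨⟨?_, ?_, hTc, ?_⟩, ?_⟩
  · apply List.perm_of_nodup_nodup_toFinset_eq hnd G.hT.1
    ext a
    simp only [List.mem_toFinset]
    rw [hmem, G.hT.2]
  · apply List.perm_of_nodup_nodup_toFinset_eq hmapnd G.hS.1
    ext a
    simp only [List.mem_toFinset]
    rw [mem_map_phi_iff G hmem, G.hS.2]
  · intro d hd
    exact consecIn_map_equiv G.φ (hSc d hd)
  · rintro i j ⟨hi, hj, h1, h2⟩
    rw [indexOf_map_equiv G.φ j X, indexOf_map_equiv G.φ i X] at h2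
    omega

lemma planar_eq_map {X Y : List ℕ} (h : IsPlanarLayout G X Y) :
    Y = X.map G.φ ∧ GValid G X := by
  obtain ⟨⟨hXp, hYp, hTc, hSc⟩, hcr⟩ := h
  have hXnd : X.Nodup := hXp.nodup_iff.2 G.hT.1
  have hYnd : Y.Nodup := hYp.nodup_iff.2 G.hS.1
  have hXmem : ∀ a, a ∈ X ↔ a < n := fun a => (hXp.mem_iff).trans (G.hT.2 a)
  have hYmem : ∀ a, a ∈ Y ↔ a < n := fun a => (hYp.mem_iff).trans (G.hS.2 a)
  have hYeq : Y = X.map G.φ := by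
    apply list_eq_of_order hYnd (hXnd.map G.φ.injective)
    · intro a
      rw [hYmem, mem_map_phi_iff G hXmem]
    · intro a b ha hb hab
      set i := G.φ.symm a with hi
      set j := G.φ.symm b with hj
      have hia : G.φ i = a := G.φ.apply_symm_apply a
      have hjb : G.φ j = b := G.φ.apply_symm_apply b
      have hin : i < n := (phi_symm_mem_iff G).2 ((hYmem a).1 ha)
      have hjn : j < n := (phi_symm_mem_iff G).2 ((hYmem b).1 hb)
      rw [← hia, ← hjb, indexOf_map_equiv, indexOf_map_equiv]
      have hne : i ≠ j := by
        intro h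
        rw [h, hjb] at hia
        subst hia
        omega
      rcases Nat.lt_trichotomy (X.idxOf i) (X.idxOf j) with h | h | h
      · exact h
      · exact absurd ((List.idxOf_inj ((hXmem i).2 hin)).1 h) hne
      · exact absurd ⟨hjn, hin, h, by rw [hia, hjb]; exact hab⟩ (hcr j i)
  refine ⟨hYeq, hXnd, hXmem, hTc, ?_⟩
  intro d hd
  have h1 : ConsecIn Y d := hSc d hd
  have he : (d.image G.φ.symm).image G.φ.symm.symm = d := by
    ext y; simp
  have h2 := consecIn_map_equiv (X := Y) (s := d.image G.φ.symm) G.φ.symm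
    (by rw [he]; exact h1)
  have h3 : Y.map G.φ.symm = X := by
    rw [hYeq, List.map_map]
    simp
  rwa [h3] at h2

lemma gvalid_reverse {X : List ℕ} (hX : GValid G X) : GValid G X.reverse := by
  obtain ⟨hnd, hmem, hTc, hSc⟩ := hX
  exact ⟨by simpa using hnd, fun a => by rw [List.mem_reverse]; exact hmem a,
    fun c hc => consecIn_reverse (hTc c hc), fun d hd => consecIn_reverse (hSc d hd)⟩

/-- The key overlap lemma from irreducibility. -/
lemma key_overlap (hirr : IrreducibleTanglegram G) {c : Finset ℕ}
    (hc : G.T.Clade c) (hcard : 2 ≤ c.card) (hne : c ≠ Finset.range n) :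
    ∃ d, G.S.Clade d ∧
      ((d.image G.φ.symm) ∩ c).Nonempty ∧ (c \ (d.image G.φ.symm)).Nonempty ∧
      ((d.image G.φ.symm) \ c).Nonempty := by
  have hcsub : c ⊆ G.T.leaves := BTree.clade_subset hc
  have hcsub' : c.image G.φ ⊆ G.S.leaves := by
    intro y hy
    obtain ⟨x, hx, rfl⟩ := Finset.mem_image.1 hy
    exact (mem_S_leaves G).2 ((phi_mem_iff G).2 ((mem_T_leaves G).1 (hcsub hx)))
  have hne' : (c.image G.φ).Nonempty :=
    (BTree.clade_nonempty hc).image G.φ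
  rcases BTree.exists_clade_overlap_or_eq G.hS.1 hcsub' hne' with
    ⟨d, hd, h1, h2, h3⟩ | ⟨d, hd, hdeq⟩
  · refine ⟨d, hd, ?_, ?_, ?_⟩
    · obtain ⟨y, hy⟩ := h1
      rw [Finset.mem_inter] at hy
      obtain ⟨x, hx, rfl⟩ := Finset.mem_image.1 hy.2
      exact ⟨x, Finset.mem_inter.2 ⟨Finset.mem_image.2 ⟨G.φ x, hy.1, by simp⟩, hx⟩⟩
    · obtain ⟨y, hy⟩ := h2
      rw [Finset.mem_sdiff] at hy
      obtain ⟨x, hx, rfl⟩ := Finset.mem_image.1 hy.1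
      refine ⟨x, Finset.mem_sdiff.2 ⟨hx, ?_⟩⟩
      intro hxB
      obtain ⟨z, hz, hzx⟩ := Finset.mem_image.1 hxB
      apply hy.2
      have hzz : z = G.φ x := by simpa using congrArg G.φ hzx
      rwa [hzz] at hz
    · obtain ⟨y, hy⟩ := h3
      rw [Finset.mem_sdiff] at hy
      refine ⟨G.φ.symm y, Finset.mem_sdiff.2 ⟨Finset.mem_image.2 ⟨y, hy.1, rfl⟩, ?_⟩⟩
      intro hmem
      apply hy.2
      exact Finset.mem_image.2 ⟨G.φ.symm y, hmem, by simp⟩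
  · exfalso
    apply hne
    have hlmp : LeafMatchedPair G c d := by
      refine ⟨BTree.internalClade_of_two_le hc hcard,
        BTree.internalClade_of_two_le hd ?_, hdeq⟩
      rw [hdeq, Finset.card_image_of_injective _ G.φ.injective]
      exact hcard
    exact (hirr.2 c d hlmp).1

end TG

section Rigid
variable {n : ℕ}

/-- Agreement of relative order of `x`, `y` between lists `X` and `Z`. -/
def AgreeP (X Z : List ℕ) (x y : ℕ) : Prop :=
  X.idxOf x < X.idxOf y ↔ Z.idxOf x < Z.idxOf y

lemma agree_refl (X Z : List ℕ) (x : ℕ) : AgreeP X Z x x := by unfold AgreeP; omega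

lemma agree_symm {X Z : List ℕ} (hXnd : X.Nodup) (hZnd : Z.Nodup) {x y : ℕ}
    (hxX : x ∈ X) (hyX : y ∈ X) (hxZ : x ∈ Z) (hyZ : y ∈ Z)
    (h : AgreeP X Z x y) : AgreeP X Z y x := by
  by_cases hxy : x = y
  · subst hxy; exact h
  · have e1 : X.idxOf x ≠ X.idxOf y := fun he => hxy ((List.idxOf_inj hxX).1 he)
    have e2 : Z.idxOf x ≠ Z.idxOf y := fun he => hxy ((List.idxOf_inj hxZ).1 he)
    constructor
    · intro h1
      have h2 : ¬ Z.idxOf x < Z.idxOf y := fun hc => absurd (h.2 hc) (by omega)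
      omega
    · intro h1
      have h2 : ¬ X.idxOf x < X.idxOf y := fun hc => absurd (h.1 hc) (by omega)
      omega

variable (G : Tanglegram n)

lemma clade_lt {c : Finset ℕ} (hc : G.T.Clade c) {x : ℕ} (hx : x ∈ c) : x < n :=
  (mem_T_leaves G).1 (BTree.clade_subset hc hx)

lemma gvalid_mem {X : List ℕ} (hX : GValid G X) {x : ℕ} (hx : x < n) : x ∈ X :=
  (hX.2.1 x).2 hx

/-- All cross pairs between two disjoint clades agree once one pair does. -/
lemma cross_agree {X Z : List ℕ} (hX : GValid G X) (hZ : GValid G Z)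
    {c1 c2 : Finset ℕ} (h1 : G.T.Clade c1) (h2 : G.T.Clade c2)
    (hdisj : Disjoint c1 c2) {u v : ℕ} (hu : u ∈ c1) (hv : v ∈ c2)
    (ha : AgreeP X Z u v) :
    ∀ x ∈ c1, ∀ y ∈ c2, AgreeP X Z x y := by
  intro x hx y hy
  have hXnd := hX.1
  have hZnd := hZ.1
  have c1X := hX.2.2.1 c1 h1
  have c2X := hX.2.2.1 c2 h2
  have c1Z := hZ.2.2.1 c1 h1
  have c2Z := hZ.2.2.1 c2 h2
  have mx : x < n := clade_lt G h1 hx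
  have my : y < n := clade_lt G h2 hy
  have mu : u < n := clade_lt G h1 hu
  have mv : v < n := clade_lt G h2 hv
  have hyc1 : y ∉ c1 := fun h => Finset.disjoint_left.1 hdisj h hy
  have hvc1 : v ∉ c1 := fun h => Finset.disjoint_left.1 hdisj h hv
  have huc2 : u ∉ c2 := fun h => Finset.disjoint_left.1 hdisj hu h
  calc X.idxOf x < X.idxOf y
      ↔ X.idxOf u < X.idxOf y := cross_const₁ hXnd c1X hx hu hyc1
        (gvalid_mem G hX mx) (gvalid_mem G hX mu) (gvalid_mem G hX my)
    _ ↔ X.idxOf u < X.idxOf v := cross_const₂ hXnd c2X hy hv huc2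
        (gvalid_mem G hX my) (gvalid_mem G hX mv) (gvalid_mem G hX mu)
    _ ↔ Z.idxOf u < Z.idxOf v := ha
    _ ↔ Z.idxOf u < Z.idxOf y := (cross_const₂ hZnd c2Z hy hv huc2
        (gvalid_mem G hZ my) (gvalid_mem G hZ mv) (gvalid_mem G hZ mu)).symm
    _ ↔ Z.idxOf x < Z.idxOf y := (cross_const₁ hZnd c1Z hx hu hyc1
        (gvalid_mem G hZ mx) (gvalid_mem G hZ mu) (gvalid_mem G hZ my)).symm

/-- The main rigidity induction: on a proper clade, external agreement forces
internal agreement. -/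
lemma rigid (hirr : IrreducibleTanglegram G) {X Z : List ℕ}
    (hX : GValid G X) (hZ : GValid G Z) :
    ∀ N (c : Finset ℕ), c.card ≤ N → G.T.Clade c → c ≠ Finset.range n →
      (∀ x ∈ c, ∀ y, y < n → y ∉ c → AgreeP X Z x y) →
      ∀ x ∈ c, ∀ y ∈ c, AgreeP X Z x y := by
  intro N
  induction N with
  | zero =>
      intro c hcard _ _ _ x hx
      rw [Finset.card_eq_zero.1 (Nat.le_antisymm hcard (Nat.zero_le _))] at hx
      exact absurd hx (Finset.notMem_empty x)
  | succ N ih =>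
      intro c hcard hclade hne hext x hx y hy
      by_cases hsmall : c.card ≤ 1
      · have hxy : x = y := Finset.card_le_one.1 hsmall x hx y hy
        subst hxy
        exact agree_refl _ _ _
      · push_neg at hsmall
        have hXnd := hX.1
        have hZnd := hZ.1
        obtain ⟨c1, c2, hnc⟩ := BTree.exists_nodeClades hclade hsmall
        have hc1 : G.T.Clade c1 := BTree.nodeClades_clade₁ hnc
        have hc2 : G.T.Clade c2 := BTree.nodeClades_clade₂ hnc
        have hunion : c = c1 ∪ c2 := BTree.nodeClades_union hnc
        have hdisj : Disjoint c1 c2 := BTree.nodeClades_disjoint G.hT.1 hnc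
        have hc1ne : c1.Nonempty := BTree.clade_nonempty hc1
        have hc2ne : c2.Nonempty := BTree.clade_nonempty hc2
        -- the overlapping block B
        obtain ⟨d, hd, hBc, hcB, hBnc⟩ := key_overlap G hirr hclade hsmall hne
        set B : Finset ℕ := d.image G.φ.symm with hBdef
        have hBlt : ∀ z ∈ B, z < n := by
          intro z hz
          obtain ⟨w, hw, rfl⟩ := Finset.mem_image.1 hz
          exact (phi_symm_mem_iff G).2 ((mem_S_leaves G).1 (BTree.clade_subset hd hw))
        obtain ⟨z0, hz0⟩ := hBnc
        rw [Finset.mem_sdiff] at hz0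
        have hz0n : z0 < n := hBlt z0 hz0.1
        have hBX : ConsecIn X B := hX.2.2.2 d hd
        have hBZ : ConsecIn Z B := hZ.2.2.2 d hd
        have hcX : ConsecIn X c := hX.2.2.1 c hclade
        have hcZ : ConsecIn Z c := hZ.2.2.1 c hclade
        -- step 4: pairs across the B-split of c agree
        have hstep4 : ∀ a ∈ c, a ∉ B → ∀ b ∈ c, b ∈ B → AgreeP X Z a b := by
          intro a ha haB b hb hbB
          have man : a < n := clade_lt G hclade ha
          have mbn : b < n := clade_lt G hclade hb
          have l1 := overlap_link hXnd hcX hBX ha haB hb hbB hz0.2 hz0.1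
            (gvalid_mem G hX man) (gvalid_mem G hX mbn) (gvalid_mem G hX hz0n)
          have l2 := overlap_link hZnd hcZ hBZ ha haB hb hbB hz0.2 hz0.1
            (gvalid_mem G hZ man) (gvalid_mem G hZ mbn) (gvalid_mem G hZ hz0n)
          have l3 : AgreeP X Z b z0 := hext b hb z0 hz0n hz0.2
          exact l1.trans (l3.trans l2.symm)
        -- step 5: an anchor pair across (c1, c2)
        have hanchor : ∃ u ∈ c1, ∃ v ∈ c2, AgreeP X Z u v := by
          have hsub1 : c1 ⊆ c := hunion ▸ Finset.subset_union_left
          have hsub2 : c2 ⊆ c := hunion ▸ Finset.subset_union_right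
          by_cases hc1B : ∃ u ∈ c1, u ∈ B
          · obtain ⟨u, hu, huB⟩ := hc1B
            by_cases hc2B : ∃ v ∈ c2, v ∉ B
            · obtain ⟨v, hv, hvB⟩ := hc2B
              have h := hstep4 v (hsub2 hv) hvB u (hsub1 hu) huB
              exact ⟨u, hu, v, hv, agree_symm hXnd hZnd
                (gvalid_mem G hX (clade_lt G hc2 hv)) (gvalid_mem G hX (clade_lt G hc1 hu))
                (gvalid_mem G hZ (clade_lt G hc2 hv)) (gvalid_mem G hZ (clade_lt G hc1 hu)) h⟩
            · push_neg at hc2B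
              obtain ⟨q, hq⟩ := hcB
              rw [Finset.mem_sdiff] at hq
              have hqc1 : q ∈ c1 := by
                rcases Finset.mem_union.1 (hunion ▸ hq.1) with h | h
                · exact h
                · exact absurd (hc2B q h) (by exact fun hh => hq.2 hh)
              obtain ⟨v, hv⟩ := hc2ne
              exact ⟨q, hqc1, v, hv, hstep4 q hq.1 hq.2 v (hsub2 hv) (hc2B v hv)⟩
          · push_neg at hc1B
            obtain ⟨p, hp⟩ := hBc
            rw [Finset.mem_inter] at hp
            have hpc2 : p ∈ c2 := by
              rcases Finset.mem_union.1 (hunion ▸ hp.2) with h | h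
              · exact absurd hp.1 (hc1B p h)
              · exact h
            obtain ⟨u, hu⟩ := hc1ne
            exact ⟨u, hu, p, hpc2, hstep4 u (hsub1 hu) (hc1B u hu) p hp.2 hp.1⟩
        obtain ⟨u, hu, v, hv, hA⟩ := hanchor
        have hcross := cross_agree G hX hZ hc1 hc2 hdisj hu hv hA
        -- inner agreement via the inductive hypothesis
        have hsub1 : c1 ⊆ c := hunion ▸ Finset.subset_union_left
        have hsub2 : c2 ⊆ c := hunion ▸ Finset.subset_union_right
        have hcard1 : c1.card ≤ N := by
          have hss : c1 ⊂ c := by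
            rw [Finset.ssubset_iff_of_subset hsub1]
            obtain ⟨w, hw⟩ := hc2ne
            exact ⟨w, hsub2 hw, fun h => Finset.disjoint_left.1 hdisj h hw⟩
          have := Finset.card_lt_card hss
          omega
        have hcard2 : c2.card ≤ N := by
          have hss : c2 ⊂ c := by
            rw [Finset.ssubset_iff_of_subset hsub2]
            obtain ⟨w, hw⟩ := hc1ne
            exact ⟨w, hsub1 hw, fun h => Finset.disjoint_left.1 hdisj hw h⟩
          have := Finset.card_lt_card hss
          omega
        have hne1 : c1 ≠ Finset.range n := by
          intro h
          obtain ⟨w, hw⟩ := hc2ne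
          have : w ∈ c1 := h ▸ Finset.mem_range.2 (clade_lt G hc2 hw)
          exact Finset.disjoint_left.1 hdisj this hw
        have hne2 : c2 ≠ Finset.range n := by
          intro h
          obtain ⟨w, hw⟩ := hc1ne
          have : w ∈ c2 := h ▸ Finset.mem_range.2 (clade_lt G hc1 hw)
          exact Finset.disjoint_left.1 hdisj hw this
        have hext1 : ∀ a ∈ c1, ∀ b, b < n → b ∉ c1 → AgreeP X Z a b := by
          intro a ha b hb hbc1
          by_cases hbc : b ∈ c
          · rcases Finset.mem_union.1 (hunion ▸ hbc) with h | h
            · exact absurd h hbc1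
            · exact hcross a ha b h
          · exact hext a (hsub1 ha) b hb hbc
        have hext2 : ∀ a ∈ c2, ∀ b, b < n → b ∉ c2 → AgreeP X Z a b := by
          intro a ha b hb hbc2
          by_cases hbc : b ∈ c
          · rcases Finset.mem_union.1 (hunion ▸ hbc) with h | h
            · exact agree_symm hXnd hZnd
                (gvalid_mem G hX (clade_lt G hc1 h)) (gvalid_mem G hX (clade_lt G hc2 ha))
                (gvalid_mem G hZ (clade_lt G hc1 h)) (gvalid_mem G hZ (clade_lt G hc2 ha))
                (hcross b h a ha)
            · exact absurd h hbc2
          · exact hext a (hsub2 ha) b hb hbc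
        have inner1 := ih c1 hcard1 hc1 hne1 hext1
        have inner2 := ih c2 hcard2 hc2 hne2 hext2
        rcases Finset.mem_union.1 (hunion ▸ hx) with hx1 | hx2 <;>
          rcases Finset.mem_union.1 (hunion ▸ hy) with hy1 | hy2
        · exact inner1 x hx1 y hy1
        · exact hcross x hx1 y hy2
        · exact agree_symm hXnd hZnd
            (gvalid_mem G hX (clade_lt G hc1 hy1)) (gvalid_mem G hX (clade_lt G hc2 hx2))
            (gvalid_mem G hZ (clade_lt G hc1 hy1)) (gvalid_mem G hZ (clade_lt G hc2 hx2))
            (hcross y hy1 x hx2)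
        · exact inner2 x hx2 y hy2

end Rigid

section Final
variable {n : ℕ} (G : Tanglegram n)

lemma T_leaves_eq : G.T.leaves = Finset.range n := by
  ext a
  rw [mem_T_leaves, Finset.mem_range]

lemma eq_of_anchor (hirr : IrreducibleTanglegram G) {X Z : List ℕ}
    (hX : GValid G X) (hZ : GValid G Z) {c1 c2 : Finset ℕ}
    (hnc : G.T.NodeClades G.T.leaves c1 c2) {u v : ℕ} (hu : u ∈ c1) (hv : v ∈ c2)
    (hA : AgreeP X Z u v) : X = Z := by
  have hXnd := hX.1
  have hZnd := hZ.1
  have hc1 : G.T.Clade c1 := BTree.nodeClades_clade₁ hnc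
  have hc2 : G.T.Clade c2 := BTree.nodeClades_clade₂ hnc
  have hunion : G.T.leaves = c1 ∪ c2 := BTree.nodeClades_union hnc
  have hdisj : Disjoint c1 c2 := BTree.nodeClades_disjoint G.hT.1 hnc
  have hc1ne : c1.Nonempty := BTree.clade_nonempty hc1
  have hc2ne : c2.Nonempty := BTree.clade_nonempty hc2
  have hcross := cross_agree G hX hZ hc1 hc2 hdisj hu hv hA
  have hmem_union : ∀ a, a < n → a ∈ c1 ∪ c2 := by
    intro a ha
    rw [← hunion]
    exact (mem_T_leaves G).2 ha
  have hne1 : c1 ≠ Finset.range n := by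
    intro h
    obtain ⟨w, hw⟩ := hc2ne
    have : w ∈ c1 := h ▸ Finset.mem_range.2 (clade_lt G hc2 hw)
    exact Finset.disjoint_left.1 hdisj this hw
  have hne2 : c2 ≠ Finset.range n := by
    intro h
    obtain ⟨w, hw⟩ := hc1ne
    have : w ∈ c2 := h ▸ Finset.mem_range.2 (clade_lt G hc1 hw)
    exact Finset.disjoint_left.1 hdisj hw this
  have hext1 : ∀ a ∈ c1, ∀ b, b < n → b ∉ c1 → AgreeP X Z a b := by
    intro a ha b hb hbc1
    rcases Finset.mem_union.1 (hmem_union b hb) with h | h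
    · exact absurd h hbc1
    · exact hcross a ha b h
  have hext2 : ∀ a ∈ c2, ∀ b, b < n → b ∉ c2 → AgreeP X Z a b := by
    intro a ha b hb hbc2
    rcases Finset.mem_union.1 (hmem_union b hb) with h | h
    · exact agree_symm hXnd hZnd
        (gvalid_mem G hX (clade_lt G hc1 h)) (gvalid_mem G hX (clade_lt G hc2 ha))
        (gvalid_mem G hZ (clade_lt G hc1 h)) (gvalid_mem G hZ (clade_lt G hc2 ha))
        (hcross b h a ha)
    · exact absurd h hbc2
  have inner1 := rigid G hirr hX hZ c1.card c1 le_rfl hc1 hne1 hext1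
  have inner2 := rigid G hirr hX hZ c2.card c2 le_rfl hc2 hne2 hext2
  have hall : ∀ a b, a < n → b < n → AgreeP X Z a b := by
    intro a b ha hb
    rcases Finset.mem_union.1 (hmem_union a ha) with ha' | ha' <;>
      rcases Finset.mem_union.1 (hmem_union b hb) with hb' | hb'
    · exact inner1 a ha' b hb'
    · exact hcross a ha' b hb'
    · exact agree_symm hXnd hZnd
        (gvalid_mem G hX (clade_lt G hc1 hb')) (gvalid_mem G hX (clade_lt G hc2 ha'))
        (gvalid_mem G hZ (clade_lt G hc1 hb')) (gvalid_mem G hZ (clade_lt G hc2 ha'))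
        (hcross b hb' a ha')
    · exact inner2 a ha' b hb'
  apply list_eq_of_order hXnd hZnd
  · intro a
    rw [hX.2.1 a, hZ.2.1 a]
  · intro a b ha hb hab
    exact (hall a b ((hX.2.1 a).1 ha) ((hX.2.1 b).1 hb)).1 hab

end Final

/-- An irreducible planar tanglegram of size at least `3` has
exactly two planar layouts, which are mirror images of one another (each is obtained
from the other by reversing the order of `X` and reversing the order of `Y`). -/
theorem irreducible_two_planar_layouts {n : ℕ} (G : Tanglegram n) (hn : 3 ≤ n)
    (hpl : IsPlanarTanglegram G) (hirr : IrreducibleTanglegram G) :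
    ∃ X Y : List ℕ, IsPlanarLayout G X Y ∧
      (X, Y) ≠ (X.reverse, Y.reverse) ∧
      ∀ X' Y' : List ℕ, IsPlanarLayout G X' Y' ↔
        ((X', Y') = (X, Y) ∨ (X', Y') = (X.reverse, Y.reverse)) := by
  obtain ⟨X, Y, hP⟩ := hpl
  obtain ⟨hYeq, hV⟩ := planar_eq_map G hP
  have hXnd := hV.1
  have hroot : G.T.Clade G.T.leaves := BTree.clade_leaves G.T
  have hrootcard : 2 ≤ G.T.leaves.card := by
    rw [T_leaves_eq, Finset.card_range]
    omega
  obtain ⟨c1, c2, hnc⟩ := BTree.exists_nodeClades hroot hrootcard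
  have hc1 : G.T.Clade c1 := BTree.nodeClades_clade₁ hnc
  have hc2 : G.T.Clade c2 := BTree.nodeClades_clade₂ hnc
  have hdisj : Disjoint c1 c2 := BTree.nodeClades_disjoint G.hT.1 hnc
  obtain ⟨u0, hu0⟩ := BTree.clade_nonempty hc1
  obtain ⟨v0, hv0⟩ := BTree.clade_nonempty hc2
  have hu0n : u0 < n := clade_lt G hc1 hu0
  have hv0n : v0 < n := clade_lt G hc2 hv0
  have huv : u0 ≠ v0 := fun h => Finset.disjoint_left.1 hdisj hu0 (h ▸ hv0)
  have hu0X : u0 ∈ X := gvalid_mem G hV hu0n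
  have hv0X : v0 ∈ X := gvalid_mem G hV hv0n
  refine ⟨X, Y, hP, ?_, ?_⟩
  · intro h
    have hXX : X = X.reverse := congrArg Prod.fst h
    have f1 : X.reverse.idxOf u0 = X.length - 1 - X.idxOf u0 :=
      indexOf_reverse hXnd hu0X
    have f2 : X.reverse.idxOf v0 = X.length - 1 - X.idxOf v0 :=
      indexOf_reverse hXnd hv0X
    rw [← hXX] at f1 f2
    have l1 : X.idxOf u0 < X.length := List.idxOf_lt_length_iff.2 hu0X
    have l2 : X.idxOf v0 < X.length := List.idxOf_lt_length_iff.2 hv0X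
    have e : X.idxOf u0 = X.idxOf v0 := by omega
    exact huv ((List.idxOf_inj hu0X).1 e)
  · intro X' Y'
    constructor
    · intro hP'
      obtain ⟨hY'eq, hV'⟩ := planar_eq_map G hP'
      have hX'nd := hV'.1
      have hu0X' : u0 ∈ X' := gvalid_mem G hV' hu0n
      have hv0X' : v0 ∈ X' := gvalid_mem G hV' hv0n
      by_cases hA : AgreeP X X' u0 v0
      · left
        have hXX' : X = X' := eq_of_anchor G hirr hV hV' hnc hu0 hv0 hA
        rw [Prod.mk.injEq]
        exact ⟨hXX'.symm, by rw [hY'eq, ← hXX', ← hYeq]⟩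
      · right
        have hV'' := gvalid_reverse G hV'
        have hA'' : AgreeP X X'.reverse u0 v0 := by
          have f1 : X'.reverse.idxOf u0 = X'.length - 1 - X'.idxOf u0 :=
            indexOf_reverse hX'nd hu0X'
          have f2 : X'.reverse.idxOf v0 = X'.length - 1 - X'.idxOf v0 :=
            indexOf_reverse hX'nd hv0X'
          have l1 : X'.idxOf u0 < X'.length := List.idxOf_lt_length_iff.2 hu0X'
          have l2 : X'.idxOf v0 < X'.length := List.idxOf_lt_length_iff.2 hv0X'
          have e2 : X'.idxOf u0 ≠ X'.idxOf v0 :=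
            fun he => huv ((List.idxOf_inj hu0X').1 he)
          unfold AgreeP at hA ⊢
          rw [f1, f2]
          have hpq : (X.idxOf u0 < X.idxOf v0) ↔
              ¬(X'.idxOf u0 < X'.idxOf v0) := by tauto
          rw [hpq]
          omega
        have hXX' : X = X'.reverse := eq_of_anchor G hirr hV hV'' hnc hu0 hv0 hA''
        have hX'eq : X' = X.reverse := by
          rw [hXX', List.reverse_reverse]
        rw [Prod.mk.injEq]
        refine ⟨hX'eq, ?_⟩
        rw [hY'eq, hX'eq, hYeq, List.map_reverse]
    · intro h
      rcases h with h | h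
      · rw [Prod.mk.injEq] at h
        rw [h.1, h.2]
        exact hP
      · rw [Prod.mk.injEq] at h
        rw [h.1, h.2]
        have := gvalid_planar G (gvalid_reverse G hV)
        rwa [hYeq, ← List.map_reverse]
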